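/- Let A : U → Ũ and C : ℝ^{r,s} → ℝ^{s,r} be bijective linear maps between admissible modules of Cl_{r,s} and Cl_{s,r} respectively, satisfying A^τ J̃_z A = J_{C^τ(z)} for all z ∈ ℝ^{s,r}, with |det(A A^τ)| = 1, r ≠ s, and dim U = dim Ũ = 2N. Then C C^τ = −Id on ℝ^{s,r}. -/

import Mathlib

/-!
Write `q_r = stdForm n r`. Taking determinants in `J z * J z = -q_r(z) • 1` and
`J' w * J' w = -q_s(w) • 1` on the `2N`-dimensional spaces gives `|det (J z)| = |q_r(z)|^N` and
`|det (J' w)| = |q_s(w)|^N`, so `Aτ ∘ J' w ∘ A = J (Cτ w)` together with `|det (A ∘ Aτ)| = 1`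
forces `|q_r(Cτ w)| = |q_s(w)|`. Two real quadratic forms with the same absolute value agree up
to a global sign (restricted to a line they are polynomials whose squares coincide), and
`q_r ∘ Cτ = q_s` would contradict Sylvester's law of inertia since `r ≠ s`. Hence `Cτ` is an
anti-isometry, and nondegeneracy of `q_s` turns `q_s(C z, w) = q_r(z, Cτ w)` into `C ∘ Cτ = -1`.
-/

/-- The standard pseudo-Euclidean bilinear form of signature `(r, n - r)` on `ℝⁿ`. -/
noncomputable def stdForm (n r : ℕ) : LinearMap.BilinForm ℝ (Fin n → ℝ) :=
  Matrix.toBilin' (Matrix.diagonal fun i : Fin n => if (i : ℕ) < r then (1 : ℝ) else -1)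

open Module

section Determinant

variable {R : Type*} [CommRing R]

theorem LinearMap.det_mul_self_of_mul_self_eq_smul {M : Type*} [AddCommGroup M] [Module R M]
    [Module.Free R M] [Module.Finite R M] {f : Module.End R M} {c : R} (hf : f * f = c • 1) :
    LinearMap.det f * LinearMap.det f = c ^ finrank R M := by
  rw [← map_mul, hf, LinearMap.det_smul, Module.End.one_eq_id, LinearMap.det_id, mul_one]

theorem LinearMap.abs_det_of_mul_self_eq_smul [LinearOrder R] [IsStrictOrderedRing R]
    {M : Type*} [AddCommGroup M] [Module R M] [Module.Free R M] [Module.Finite R M]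
    {f : Module.End R M} {c : R} (hf : f * f = c • 1) {N : ℕ} (hM : finrank R M = 2 * N) :
    |LinearMap.det f| = |c| ^ N := by
  rw [← abs_pow, ← sq_eq_sq_iff_abs_eq_abs, sq, det_mul_self_of_mul_self_eq_smul hf, hM,
    pow_mul']

theorem LinearMap.det_comp_comp_linearEquiv {U W : Type*} [AddCommGroup U] [Module R U]
    [AddCommGroup W] [Module R W] (e : U ≃ₗ[R] W) (g : W →ₗ[R] U) (h : Module.End R W) :
    LinearMap.det (g ∘ₗ h ∘ₗ (e : U →ₗ[R] W)) =
      LinearMap.det ((e : U →ₗ[R] W) ∘ₗ g) * LinearMap.det h := by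
  have : g ∘ₗ h ∘ₗ (e : U →ₗ[R] W) =
      (e.symm : W →ₗ[R] U) ∘ₗ (((e : U →ₗ[R] W) ∘ₗ g) ∘ₗ h) ∘ₗ (e.symm.symm : U →ₗ[R] W) := by
    ext; simp
  rw [this, LinearMap.det_conj, LinearMap.det_comp]

end Determinant

namespace QuadraticMap

open Polynomial

variable {V : Type*} [AddCommGroup V] [Module ℝ V]

theorem apply_add_smul (Q : QuadraticForm ℝ V) (u v : V) (t : ℝ) :
    Q (u + t • v) = Q u + t * polar Q u v + t ^ 2 * Q v := by
  rw [QuadraticMap.map_add Q, QuadraticMap.map_smul, polar_smul_right, smul_eq_mul, smul_eq_mul]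
  ring

noncomputable def linePoly (Q : QuadraticForm ℝ V) (u v : V) : ℝ[X] :=
  C (Q u) + C (polar Q u v) * X + C (Q v) * X ^ 2

theorem eval_linePoly (Q : QuadraticForm ℝ V) (u v : V) (t : ℝ) :
    (linePoly Q u v).eval t = Q (u + t • v) := by
  simp only [linePoly, eval_add, eval_mul, eval_C, eval_X, eval_pow, apply_add_smul]
  ring

theorem coeff_linePoly_zero (Q : QuadraticForm ℝ V) (u v : V) :
    (linePoly Q u v).coeff 0 = Q u := by
  simp [linePoly]

theorem coeff_linePoly_two (Q : QuadraticForm ℝ V) (u v : V) :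
    (linePoly Q u v).coeff 2 = Q v := by
  simp [linePoly]

theorem eq_or_eq_neg_of_abs_eq {Q₁ Q₂ : QuadraticForm ℝ V} (h : ∀ v, |Q₁ v| = |Q₂ v|) :
    Q₁ = Q₂ ∨ Q₁ = -Q₂ := by
  by_contra! hne
  obtain ⟨u, hu⟩ := DFunLike.ne_iff.mp hne.1
  obtain ⟨v, hv⟩ := DFunLike.ne_iff.mp hne.2
  have hsq : linePoly Q₁ u v ^ 2 = linePoly Q₂ u v ^ 2 := Polynomial.funext fun t => by
    simpa only [eval_pow, eval_linePoly, sq_eq_sq_iff_abs_eq_abs] using h (u + t • v)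
  rcases sq_eq_sq_iff_eq_or_eq_neg.mp hsq with hP | hP
  · exact hu (by simpa only [coeff_linePoly_zero] using congrArg (coeff · 0) hP)
  · exact hv <| by
      simpa only [coeff_neg, coeff_linePoly_two, neg_apply] using congrArg (coeff · 2) hP

end QuadraticMap

theorem LinearMap.BilinForm.eq_of_toQuadraticMap_eq {R V : Type*} [CommRing R]
    [Invertible (2 : R)] [AddCommGroup V] [Module R V] {B₁ B₂ : LinearMap.BilinForm R V}
    (h₁ : LinearMap.IsSymm B₁) (h₂ : LinearMap.IsSymm B₂)
    (h : B₁.toQuadraticMap = B₂.toQuadraticMap) : B₁ = B₂ := by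
  by_contra hne
  obtain ⟨x, hx⟩ := exists_bilinForm_self_ne_zero (sub_ne_zero.mpr hne)
    ⟨fun x y => congrArg₂ (· - ·) (h₁.eq x y) (h₂.eq x y)⟩
  exact hx (by simpa [sub_eq_zero] using congr($h x))

theorem finrank_le_add_of_pos_of_nonpos {V V' X Y : Type*} [AddCommGroup V] [Module ℝ V]
    [AddCommGroup V'] [Module ℝ V'] [AddCommGroup X] [Module ℝ X] [FiniteDimensional ℝ X]
    [AddCommGroup Y] [Module ℝ Y] [FiniteDimensional ℝ Y]
    {Q : V → ℝ} {Q' : V' → ℝ} (M : V →ₗ[ℝ] V') (hM : ∀ v, Q' (M v) = Q v)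
    (ρ : V →ₗ[ℝ] X) (π : V' →ₗ[ℝ] Y) (hpos : ∀ v, ρ v = 0 → v ≠ 0 → 0 < Q v)
    (hnonpos : ∀ y, π y = 0 → Q' y ≤ 0) :
    finrank ℝ V ≤ finrank ℝ X + finrank ℝ Y := by
  have hinj : Function.Injective (ρ.prod (π ∘ₗ M)) := by
    rw [← LinearMap.ker_eq_bot, LinearMap.ker_eq_bot']
    intro v hv
    obtain ⟨hρ, hπ⟩ := Prod.ext_iff.mp hv
    by_contra hv0
    exact (hpos v hρ hv0).not_ge (hM v ▸ hnonpos (M v) hπ)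
  simpa only [Module.finrank_prod] using LinearMap.finrank_le_finrank_of_injective hinj

theorem Fin.card_subtype_val_lt {n k : ℕ} : Fintype.card {i : Fin n // (i : ℕ) < k} = min n k := by
  rw [Fintype.card_subtype, Fin.card_filter_val_lt]

theorem Fin.card_subtype_le_val {n k : ℕ} : Fintype.card {i : Fin n // k ≤ (i : ℕ)} = n - k := by
  have := Fintype.card_subtype_compl (fun i : Fin n => (i : ℕ) < k)
  simp only [not_lt, Fintype.card_fin, Fin.card_subtype_val_lt] at this
  omega

section StdForm

open Matrix

theorem stdForm_apply (n r : ℕ) (z w : Fin n → ℝ) :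
    stdForm n r z w = ∑ i : Fin n, (if (i : ℕ) < r then 1 else -1) * (z i * w i) := by
  simp only [stdForm, Matrix.toBilin'_apply', dotProduct, Matrix.mulVec_diagonal]
  exact Finset.sum_congr rfl fun i _ => by ring

theorem stdForm_comm (n r : ℕ) (z w : Fin n → ℝ) : stdForm n r z w = stdForm n r w z := by
  simp only [stdForm_apply, mul_comm (z _)]

theorem stdForm_self_eq_dotProduct {n r : ℕ} {z : Fin n → ℝ}
    (hz : ∀ i : Fin n, r ≤ i → z i = 0) :
    stdForm n r z z = z ⬝ᵥ z := by
  rw [stdForm_apply, dotProduct]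
  refine Finset.sum_congr rfl fun i _ => ?_
  split_ifs with hi
  · ring
  · simp [hz i (not_lt.mp hi)]

theorem stdForm_self_eq_neg_dotProduct {n r : ℕ} {z : Fin n → ℝ}
    (hz : ∀ i : Fin n, i < r → z i = 0) :
    stdForm n r z z = -(z ⬝ᵥ z) := by
  rw [stdForm_apply, dotProduct, ← Finset.sum_neg_distrib]
  refine Finset.sum_congr rfl fun i _ => ?_
  split_ifs with hi
  · simp [hz i hi]
  · ring

theorem stdForm_nondegenerate (n r : ℕ) : (stdForm n r).Nondegenerate := by
  refine LinearMap.BilinForm.nondegenerate_toBilin'_iff_det_ne_zero.mpr ?_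
  rw [det_diagonal, Finset.prod_ne_zero_iff]
  intro i _
  split_ifs <;> norm_num

/-- Sylvester: an isometry cannot lower the positive index (`s`, resp. `r`) nor the negative index
(`m - s`, resp. `n - r`). -/
theorem stdForm_inertia_le_of_isometry {m n r s : ℕ} (hs : s ≤ m)
    (M : (Fin m → ℝ) →ₗ[ℝ] (Fin n → ℝ))
    (hM : ∀ x, stdForm n r (M x) (M x) = stdForm m s x x) : s ≤ r ∧ m - s ≤ n - r := by
  have hpos := finrank_le_add_of_pos_of_nonpos (Q := fun x => stdForm m s x x)
    (Q' := fun y => stdForm n r y y) M hM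
    (LinearMap.funLeft ℝ ℝ (Subtype.val : {i : Fin m // s ≤ (i : ℕ)} → Fin m))
    (LinearMap.funLeft ℝ ℝ (Subtype.val : {i : Fin n // (i : ℕ) < r} → Fin n))
    (fun x hx hx0 => by
      rw [stdForm_self_eq_dotProduct fun i hi => congrFun hx ⟨i, hi⟩]
      simpa using dotProduct_star_self_pos_iff.mpr hx0)
    (fun y hy => by
      rw [stdForm_self_eq_neg_dotProduct fun i hi => congrFun hy ⟨i, hi⟩, neg_nonpos]
      simpa using dotProduct_self_star_nonneg y)
  have hneg := finrank_le_add_of_pos_of_nonpos (Q := fun x => -stdForm m s x x)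
    (Q' := fun y => -stdForm n r y y) M (by simp [hM])
    (LinearMap.funLeft ℝ ℝ (Subtype.val : {i : Fin m // (i : ℕ) < s} → Fin m))
    (LinearMap.funLeft ℝ ℝ (Subtype.val : {i : Fin n // r ≤ (i : ℕ)} → Fin n))
    (fun x hx hx0 => by
      rw [stdForm_self_eq_neg_dotProduct fun i hi => congrFun hx ⟨i, hi⟩, neg_neg]
      simpa using dotProduct_star_self_pos_iff.mpr hx0)
    (fun y hy => by
      rw [stdForm_self_eq_dotProduct fun i hi => congrFun hy ⟨i, hi⟩, neg_nonpos]
      simpa using dotProduct_self_star_nonneg y)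
  simp only [finrank_fintype_fun_eq_card, Fintype.card_fin, Fin.card_subtype_val_lt,
    Fin.card_subtype_le_val] at hpos hneg
  omega

end StdForm

theorem CCtau_eq_neg_id_general
    {U W : Type*}
    [AddCommGroup U] [Module ℝ U] [FiniteDimensional ℝ U]
    [AddCommGroup W] [Module ℝ W] [FiniteDimensional ℝ W]
    (n r s : ℕ) (hn : r + s = n) (hrs : r ≠ s) (N : ℕ) (hN : 0 < N)
    (hdU : Module.finrank ℝ U = 2 * N) (hdW : Module.finrank ℝ W = 2 * N)
    (J : (Fin n → ℝ) →ₗ[ℝ] Module.End ℝ U)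
    (hJ : ∀ z, J z * J z = -(stdForm n r z z) • (1 : Module.End ℝ U))
    (J' : (Fin n → ℝ) →ₗ[ℝ] Module.End ℝ W)
    (hJ' : ∀ w, J' w * J' w = -(stdForm n s w w) • (1 : Module.End ℝ W))
    (A : U →ₗ[ℝ] W) (hA : Function.Bijective A)
    (C : (Fin n → ℝ) →ₗ[ℝ] (Fin n → ℝ))
    (Aτ : W →ₗ[ℝ] U)
    (Cτ : (Fin n → ℝ) →ₗ[ℝ] (Fin n → ℝ))
    (hCτ : ∀ z w : Fin n → ℝ, stdForm n s (C z) w = stdForm n r z (Cτ w))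
    (hrel : ∀ w : Fin n → ℝ,
      (Aτ ∘ₗ (J' w : W →ₗ[ℝ] W) ∘ₗ A : U →ₗ[ℝ] U) = J (Cτ w))
    (hdet : |LinearMap.det (A ∘ₗ Aτ)| = 1) :
    C ∘ₗ Cτ = -LinearMap.id := by
  have habs : ∀ w, |stdForm n r (Cτ w) (Cτ w)| = |stdForm n s w w| := fun w => by
    have hconj : LinearMap.det (J (Cτ w)) = LinearMap.det (A ∘ₗ Aτ) * LinearMap.det (J' w) := by
      rw [← hrel w]
      exact LinearMap.det_comp_comp_linearEquiv (LinearEquiv.ofBijective A hA) Aτ (J' w)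
    have hJdet := LinearMap.abs_det_of_mul_self_eq_smul (hJ (Cτ w)) hdU
    have hJ'det := LinearMap.abs_det_of_mul_self_eq_smul (hJ' w) hdW
    rw [abs_neg] at hJdet hJ'det
    rw [← pow_left_inj₀ (abs_nonneg _) (abs_nonneg _) hN.ne', ← hJdet, ← hJ'det, hconj, abs_mul,
      hdet, one_mul]
  rcases QuadraticMap.eq_or_eq_neg_of_abs_eq
    (Q₁ := LinearMap.BilinMap.toQuadraticMap ((stdForm n r).compl₁₂ Cτ Cτ))
    (Q₂ := LinearMap.BilinMap.toQuadraticMap (stdForm n s)) habs with hiso | hanti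
  · have := stdForm_inertia_le_of_isometry (m := n) (by omega) Cτ fun x => congr($hiso x)
    omega
  · have hB : (stdForm n r).compl₁₂ Cτ Cτ = -stdForm n s := by
      refine LinearMap.BilinForm.eq_of_toQuadraticMap_eq ⟨fun x y => stdForm_comm n r _ _⟩
        ⟨fun x y => by simp [stdForm_comm n s x y]⟩ ?_
      rwa [LinearMap.BilinMap.toQuadraticMap_neg]
    refine LinearMap.ext fun w => eq_neg_iff_add_eq_zero.mpr <|
      (stdForm_nondegenerate n s).1 _ fun v => ?_
    rw [map_add, LinearMap.add_apply, LinearMap.comp_apply, hCτ, ← LinearMap.compl₁₂_apply, hB]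
    simp

/-- If `A : U → W`, `C : ℝ^{r,s} → ℝ^{s,r}` are bijective linear maps between
admissible modules of `Cl_{r,s}` and `Cl_{s,r}` with `Aᵀ J̃_z A = J_{Cᵀ z}`,
`|det (A Aᵀ)| = 1`, `r ≠ s`, `dim U = dim W = 2N`, then `C Cᵀ = -Id`. -/
theorem CCtau_eq_neg_id
    {U W : Type*}
    [AddCommGroup U] [Module ℝ U] [FiniteDimensional ℝ U]
    [AddCommGroup W] [Module ℝ W] [FiniteDimensional ℝ W]
    (n r s : ℕ) (hn : r + s = n) (hrs : r ≠ s) (N : ℕ) (hN : 0 < N)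
    (hdU : Module.finrank ℝ U = 2 * N) (hdW : Module.finrank ℝ W = 2 * N)
    (BU : LinearMap.BilinForm ℝ U) (hBUnd : BU.Nondegenerate)
    (hBUsymm : ∀ x y : U, BU x y = BU y x)
    (BW : LinearMap.BilinForm ℝ W) (hBWnd : BW.Nondegenerate)
    (hBWsymm : ∀ x y : W, BW x y = BW y x)
    (J : (Fin n → ℝ) →ₗ[ℝ] Module.End ℝ U)
    (hJ : ∀ z, J z * J z = -(stdForm n r z z) • (1 : Module.End ℝ U))
    (hJskew : ∀ (z : Fin n → ℝ) (x y : U), BU (J z x) y + BU x (J z y) = 0)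
    (J' : (Fin n → ℝ) →ₗ[ℝ] Module.End ℝ W)
    (hJ' : ∀ w, J' w * J' w = -(stdForm n s w w) • (1 : Module.End ℝ W))
    (hJ'skew : ∀ (w : Fin n → ℝ) (x y : W), BW (J' w x) y + BW x (J' w y) = 0)
    (A : U →ₗ[ℝ] W) (hA : Function.Bijective A)
    (C : (Fin n → ℝ) →ₗ[ℝ] (Fin n → ℝ)) (hC : Function.Bijective C)
    (Aτ : W →ₗ[ℝ] U) (hAτ : ∀ (x : U) (y : W), BW (A x) y = BU x (Aτ y))
    (Cτ : (Fin n → ℝ) →ₗ[ℝ] (Fin n → ℝ))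
    (hCτ : ∀ z w : Fin n → ℝ, stdForm n s (C z) w = stdForm n r z (Cτ w))
    (hrel : ∀ w : Fin n → ℝ,
      (Aτ ∘ₗ (J' w : W →ₗ[ℝ] W) ∘ₗ A : U →ₗ[ℝ] U) = J (Cτ w))
    (hdet : |LinearMap.det (A ∘ₗ Aτ)| = 1) :
    C ∘ₗ Cτ = -LinearMap.id :=
  CCtau_eq_neg_id_general n r s hn hrs N hN hdU hdW J hJ J' hJ' A hA C Aτ Cτ hCτ hrel hdet
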